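/- For nonnegative integers $i$ and $j$, $\sum_{k\ge 0}\binom{i}{k}\binom{j}{k}\, {}_2F_1\!\left[\tfrac{k-i+1}{2},\tfrac{k-i}{2};k+2;4\right]\, {}_2F_1\!\left[\tfrac{k-j+1}{2},\tfrac{k-j}{2};k+2;4\right] = {}_2F_1\!\left[\tfrac{1-i-j}{2},\tfrac{-i-j}{2};2;4\right]$. -/

import Mathlib

/-- The rising factorial `(a)ₘ = a (a+1) ⋯ (a+m-1)` in `ℚ`. -/
def risingFactorial (a : ℚ) (m : ℕ) : ℚ :=
  ∏ l ∈ Finset.range m, (a + l)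

/-- A terminating Gauss hypergeometric sum `₂F₁[a, b; c; x]`, summed for `m < N`.
When one of the numerator parameters makes all terms with `m ≥ N` vanish, this is
the full hypergeometric value. -/
def hyp2F1 (a b c x : ℚ) (N : ℕ) : ℚ :=
  ∑ m ∈ Finset.range N,
    risingFactorial a m * risingFactorial b m /
      (risingFactorial c m * m.factorial) * x ^ m

lemma rf_succ (a : ℚ) (m : ℕ) :
    risingFactorial a (m+1) = risingFactorial a m * (a + m) :=
  Finset.prod_range_succ _ _

lemma rf_zero (a : ℚ) : risingFactorial a 0 = 1 := rfl

lemma rf_dup (a : ℚ) (m : ℕ) :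
    risingFactorial a m * risingFactorial (a + 1/2) m * 4 ^ m
      = risingFactorial (2*a) (2*m) := by
  induction m with
  | zero => simp [risingFactorial]
  | succ m ih =>
    have h2 : 2*(m+1) = (2*m + 1) + 1 := by ring
    rw [rf_succ, rf_succ, h2, rf_succ, rf_succ, ← ih]
    push_cast
    ring

lemma rf_neg_zero (d t : ℕ) (h : d < t) : risingFactorial (-(d:ℚ)) t = 0 := by
  apply Finset.prod_eq_zero (Finset.mem_range.2 h)
  simp

lemma rf_neg_nat (d t : ℕ) (h : t ≤ d) :
    risingFactorial (-(d:ℚ)) t * (d - t).factorial = (-1)^t * d.factorial := by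
  induction t with
  | zero => simp [risingFactorial]
  | succ t ih =>
    have ht : t ≤ d := by omega
    have hsub : d - t = (d - (t+1)) + 1 := by omega
    have := ih ht
    rw [hsub, Nat.factorial_succ] at this
    rw [rf_succ]
    have hd : ((d - (t+1) : ℕ) : ℚ) + 1 = (d:ℚ) - t := by
      push_cast [Nat.cast_sub (by omega : t+1 ≤ d)]
      ring
    push_cast at this ⊢
    rw [hd] at this
    linear_combination -this

lemma rf_natcast (c m : ℕ) :
    risingFactorial ((c:ℚ)+1) m * c.factorial = (c+m).factorial := by
  induction m with
  | zero => simp [risingFactorial]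
  | succ m ih =>
    rw [rf_succ]
    have : c + (m+1) = (c+m) + 1 := by omega
    rw [this, Nat.factorial_succ]
    push_cast
    push_cast at ih
    nlinarith [ih]

/-- ballot number -/
def bal (k m : ℕ) : ℚ :=
  ((k+2*m).factorial : ℚ) * (k+1) / (m.factorial * (k+m+1).factorial)

/-- Motzkin triangle -/
def T (n k : ℕ) : ℚ :=
  ∑ m ∈ Finset.range (n+1), ((n.choose (k+2*m) : ℕ) : ℚ) * bal k m

lemma hyp_term (i k m : ℕ) (hk : k ≤ i) :
    (i.choose k : ℚ) *
      (risingFactorial (((k:ℚ) - i + 1)/2) m * risingFactorial (((k:ℚ) - i)/2) m /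
        (risingFactorial ((k:ℚ)+2) m * m.factorial) * 4 ^ m)
    = (i.choose (k+2*m) : ℚ) * bal k m := by
  set d : ℕ := i - k with hd
  have hdk : ((k:ℚ) - i) = -(d:ℚ) := by
    have : (d:ℚ) = (i:ℚ) - k := by
      rw [hd]; push_cast [Nat.cast_sub hk]; ring
    rw [this]; ring
  have hdup : risingFactorial (((k:ℚ) - i + 1)/2) m * risingFactorial (((k:ℚ) - i)/2) m * 4^m
      = risingFactorial (-(d:ℚ)) (2*m) := by
    have key := rf_dup ((-(d:ℚ))/2) m
    rw [hdk]
    have e1 : (-(d:ℚ) + 1)/2 = -(d:ℚ)/2 + 1/2 := by ring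
    have e2 : (-(d:ℚ))/2 = -(d:ℚ)/2 := by ring
    have e3 : (2 * (-(d:ℚ)/2)) = -(d:ℚ) := by ring
    rw [e3] at key
    rw [e1, e2, ← key]
    ring
  rcases le_or_gt (2*m) d with h2m | h2m
  · -- nonvanishing case
    have hrfneg : risingFactorial (-(d:ℚ)) (2*m) = (d.factorial : ℚ) / (d - 2*m).factorial := by
      have := rf_neg_nat d (2*m) h2m
      have hpow : ((-1 : ℚ))^(2*m) = 1 := by rw [pow_mul]; norm_num
      rw [hpow, one_mul] at this
      field_simp at this ⊢
      linarith [this]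
    have hrfc : risingFactorial ((k:ℚ)+2) m = ((k+1+m).factorial : ℚ) / (k+1).factorial := by
      have := rf_natcast (k+1) m
      push_cast at this
      have h1 : ((k:ℚ)+1)+1 = (k:ℚ)+2 := by ring
      rw [h1] at this
      field_simp
      linarith [this]
    have hik : k + 2*m ≤ i := by omega
    rw [Nat.cast_choose ℚ hk, Nat.cast_choose ℚ hik]
    have hsub1 : i - k = d := rfl
    have hsub2 : i - (k + 2*m) = d - 2*m := by omega
    rw [hsub1, hsub2, bal]
    calc (i.factorial:ℚ) / (k.factorial * d.factorial) *
          (risingFactorial (((k:ℚ) - i + 1)/2) m * risingFactorial (((k:ℚ) - i)/2) m /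
            (risingFactorial ((k:ℚ)+2) m * m.factorial) * 4 ^ m)
        = (i.factorial:ℚ) / (k.factorial * d.factorial) *
          ((risingFactorial (((k:ℚ) - i + 1)/2) m * risingFactorial (((k:ℚ) - i)/2) m * 4^m) /
            (risingFactorial ((k:ℚ)+2) m * m.factorial)) := by ring
      _ = (i.factorial:ℚ) / (k.factorial * d.factorial) *
          (((d.factorial : ℚ) / (d - 2*m).factorial) /
            ((((k+1+m).factorial : ℚ) / (k+1).factorial) * m.factorial)) := by
            rw [hdup, hrfneg, hrfc]
      _ = (i.factorial:ℚ) / ((k+2*m).factorial * (d - 2*m).factorial) *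
            (((k+2*m).factorial : ℚ) * (k+1) / (m.factorial * (k+m+1).factorial)) := by
            have e1 : (k+1).factorial = (k+1) * k.factorial := Nat.factorial_succ k
            have e2 : (k+m+1) = (k+1+m) := by omega
            rw [e2, e1]
            have h0 : (d.factorial : ℚ) ≠ 0 := Nat.cast_ne_zero.2 (Nat.factorial_ne_zero d)
            have h1 : ((d-2*m).factorial : ℚ) ≠ 0 := Nat.cast_ne_zero.2 (Nat.factorial_ne_zero _)
            have h2 : ((k+1+m).factorial : ℚ) ≠ 0 := Nat.cast_ne_zero.2 (Nat.factorial_ne_zero _)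
            have h3 : (m.factorial : ℚ) ≠ 0 := Nat.cast_ne_zero.2 (Nat.factorial_ne_zero _)
            have h4 : (k.factorial : ℚ) ≠ 0 := Nat.cast_ne_zero.2 (Nat.factorial_ne_zero _)
            have h5 : ((k+2*m).factorial : ℚ) ≠ 0 := Nat.cast_ne_zero.2 (Nat.factorial_ne_zero _)
            field_simp
            push_cast
            ring
  · -- vanishing: 2m > d
    have hz : risingFactorial (-(d:ℚ)) (2*m) = 0 := rf_neg_zero d (2*m) h2m
    have hcz : (i.choose (k+2*m) : ℚ) = 0 := by
      rw [Nat.choose_eq_zero_of_lt (by omega : i < k + 2*m)]; norm_num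
    rw [hcz, zero_mul]
    have : risingFactorial (((k:ℚ) - i + 1)/2) m * risingFactorial (((k:ℚ) - i)/2) m * 4^m = 0 := by
      rw [hdup, hz]
    calc (i.choose k : ℚ) *
          (risingFactorial (((k:ℚ) - i + 1)/2) m * risingFactorial (((k:ℚ) - i)/2) m /
            (risingFactorial ((k:ℚ)+2) m * m.factorial) * 4 ^ m)
        = (i.choose k : ℚ) *
          ((risingFactorial (((k:ℚ) - i + 1)/2) m * risingFactorial (((k:ℚ) - i)/2) m * 4^m) /
            (risingFactorial ((k:ℚ)+2) m * m.factorial)) := by ring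
      _ = 0 := by rw [this]; simp

lemma hyp_eq_T (i k : ℕ) (hk : k ≤ i) :
    (i.choose k : ℚ) * hyp2F1 (((k:ℚ) - i + 1)/2) (((k:ℚ) - i)/2) ((k:ℚ)+2) 4 (i+1) = T i k := by
  rw [hyp2F1, T, Finset.mul_sum]
  exact Finset.sum_congr rfl (fun m _ => hyp_term i k m hk)

lemma T_eq_zero {n k : ℕ} (h : n < k) : T n k = 0 := by
  rw [T]
  apply Finset.sum_eq_zero
  intro m _
  rw [Nat.choose_eq_zero_of_lt (by omega : n < k + 2*m)]
  norm_num

lemma bal_zero (k : ℕ) : bal k 0 = 1 := by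
  rw [bal]
  have e : k + 2*0 = k := by omega
  rw [e]
  have e2 : (k+0+1).factorial = (k+1) * k.factorial := by
    rw [show k+0+1 = k+1 by omega, Nat.factorial_succ]
  rw [e2]
  have h4 : (k.factorial : ℚ) ≠ 0 := Nat.cast_ne_zero.2 (Nat.factorial_ne_zero _)
  push_cast
  field_simp
  ring

lemma bal_pascal (k m : ℕ) :
    bal (k+1) (m+1) = bal k (m+1) + bal (k+2) m := by
  simp only [bal]
  have e1 : k+1 + 2*(m+1) = (k + 2*(m+1)) + 1 := by ring
  have e2 : k + 2*(m+1) = (k + 2*m + 1) + 1 := by ring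
  have e3 : k+2 + 2*m = (k + 2*m + 1) + 1 := by ring
  have e4 : k+1+(m+1)+1 = (k+m+2)+1 := by ring
  have e5 : k+(m+1)+1 = (k+m+1)+1 := by ring
  have e6 : k+2+m+1 = ((k+m+1)+1)+1 := by ring
  rw [e1, e2, e3, e4, e5, e6]
  simp only [Nat.factorial_succ]
  have h1 : ((k+2*m+1).factorial : ℚ) ≠ 0 := Nat.cast_ne_zero.2 (Nat.factorial_ne_zero _)
  have h2 : ((k+m+1).factorial : ℚ) ≠ 0 := Nat.cast_ne_zero.2 (Nat.factorial_ne_zero _)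
  have h3 : (m.factorial : ℚ) ≠ 0 := Nat.cast_ne_zero.2 (Nat.factorial_ne_zero _)
  push_cast
  field_simp
  ring


lemma bal_step (m : ℕ) : bal 0 (m+1) = bal 1 m := by
  simp only [bal]
  have e1 : 0 + 2*(m+1) = (2*m+1) + 1 := by ring
  have e2 : 1 + 2*m = 2*m+1 := by ring
  have e3 : 0+(m+1)+1 = (m+1)+1 := by ring
  have e4 : 1+m+1 = (m+1)+1 := by ring
  rw [e1, e2, e3, e4]
  simp only [Nat.factorial_succ]
  have h1 : ((2*m+1).factorial : ℚ) ≠ 0 := Nat.cast_ne_zero.2 (Nat.factorial_ne_zero _)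
  have h2 : ((m+1).factorial : ℚ) ≠ 0 := Nat.cast_ne_zero.2 (Nat.factorial_ne_zero _)
  have h3 : (m.factorial : ℚ) ≠ 0 := Nat.cast_ne_zero.2 (Nat.factorial_ne_zero _)
  push_cast
  field_simp
  ring

lemma T_ext (n k N : ℕ) (h : n+1 ≤ N) :
    T n k = ∑ m ∈ Finset.range N, ((n.choose (k+2*m) : ℕ) : ℚ) * bal k m := by
  rw [T]
  apply Finset.sum_subset (Finset.range_subset_range.2 h)
  intro m _ hm
  rw [Finset.mem_range, not_lt] at hm
  rw [Nat.choose_eq_zero_of_lt (by omega : n < k + 2*m)]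
  norm_num

lemma T_rec_succ (n k : ℕ) :
    T (n+1) (k+1) = T n k + T n (k+1) + T n (k+2) := by
  have pascal : ∀ m : ℕ, ((n+1).choose (k+1+2*m) : ℚ)
      = (n.choose (k+2*m) : ℚ) + (n.choose (k+1+2*m) : ℚ) := by
    intro m
    have : (n+1).choose (k+2*m+1) = n.choose (k+2*m) + n.choose (k+2*m+1) :=
      Nat.choose_succ_succ n (k+2*m)
    rw [show k+1+2*m = k+2*m+1 by ring, this]
    push_cast; ring
  have hB : (∑ m ∈ Finset.range (n+2), (n.choose (k+1+2*m) : ℚ) * bal (k+1) m)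
      = T n (k+1) := (T_ext n (k+1) (n+2) (by omega)).symm
  have hTk : T n k = (n.choose k : ℚ) * bal k 0
      + ∑ m ∈ Finset.range (n+1), (n.choose (k+2*(m+1)) : ℚ) * bal k (m+1) := by
    rw [T_ext n k (n+2) (by omega), Finset.sum_range_succ']
    rw [show k+2*0 = k by ring]
    ring
  have hTk2 : T n (k+2)
      = ∑ m ∈ Finset.range (n+1), (n.choose (k+2+2*m) : ℚ) * bal (k+2) m :=
    T_ext n (k+2) (n+1) (by omega)
  have hA : (∑ m ∈ Finset.range (n+2), (n.choose (k+2*m) : ℚ) * bal (k+1) m)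
      = T n k + T n (k+2) := by
    rw [Finset.sum_range_succ']
    rw [show k+2*0 = k by ring]
    have step : ∀ m : ℕ, (n.choose (k+2*(m+1)) : ℚ) * bal (k+1) (m+1)
        = (n.choose (k+2*(m+1)) : ℚ) * bal k (m+1) + (n.choose (k+2+2*m) : ℚ) * bal (k+2) m := by
      intro m
      rw [bal_pascal, show k+2+2*m = k+2*(m+1) by ring]
      ring
    calc (∑ m ∈ Finset.range (n+1), (n.choose (k+2*(m+1)) : ℚ) * bal (k+1) (m+1))
          + (n.choose k : ℚ) * bal (k+1) 0
        = (∑ m ∈ Finset.range (n+1), ((n.choose (k+2*(m+1)) : ℚ) * bal k (m+1)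
            + (n.choose (k+2+2*m) : ℚ) * bal (k+2) m))
          + (n.choose k : ℚ) * bal k 0 := by
          rw [bal_zero, bal_zero]
          congr 1
          exact Finset.sum_congr rfl (fun m _ => step m)
      _ = T n k + T n (k+2) := by
          rw [Finset.sum_add_distrib, hTk, hTk2]
          ring
  calc T (n+1) (k+1)
      = ∑ m ∈ Finset.range (n+2), ((n+1).choose (k+1+2*m) : ℚ) * bal (k+1) m := rfl
    _ = ∑ m ∈ Finset.range (n+2), ((n.choose (k+2*m) : ℚ) * bal (k+1) m
          + (n.choose (k+1+2*m) : ℚ) * bal (k+1) m) := by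
        refine Finset.sum_congr rfl (fun m _ => ?_)
        rw [pascal m]; ring
    _ = T n k + T n (k+1) + T n (k+2) := by
        rw [Finset.sum_add_distrib, hA, hB]
        ring

lemma T_rec_zero (n : ℕ) : T (n+1) 0 = T n 0 + T n 1 := by
  have pascal : ∀ m : ℕ, ((n+1).choose (0+2*(m+1)) : ℚ)
      = (n.choose (0+2*(m+1)) : ℚ) + (n.choose (1+2*m) : ℚ) := by
    intro m
    have : (n+1).choose (1+2*m+1) = n.choose (1+2*m) + n.choose (1+2*m+1) :=
      Nat.choose_succ_succ n (1+2*m)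
    rw [show 0+2*(m+1) = 1+2*m+1 by ring, this]
    push_cast; ring
  have hT0 : T n 0 = (n.choose 0 : ℚ) * bal 0 0
      + ∑ m ∈ Finset.range (n+1), (n.choose (0+2*(m+1)) : ℚ) * bal 0 (m+1) := by
    rw [T_ext n 0 (n+2) (by omega), Finset.sum_range_succ']
    ring
  have hT1 : T n 1
      = ∑ m ∈ Finset.range (n+1), (n.choose (1+2*m) : ℚ) * bal 1 m :=
    T_ext n 1 (n+1) (by omega)
  calc T (n+1) 0
      = ∑ m ∈ Finset.range (n+2), ((n+1).choose (0+2*m) : ℚ) * bal 0 m := rfl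
    _ = (∑ m ∈ Finset.range (n+1), ((n+1).choose (0+2*(m+1)) : ℚ) * bal 0 (m+1))
        + ((n+1).choose (0+2*0) : ℚ) * bal 0 0 := Finset.sum_range_succ' _ _
    _ = (∑ m ∈ Finset.range (n+1), ((n.choose (0+2*(m+1)) : ℚ) * bal 0 (m+1)
          + (n.choose (1+2*m) : ℚ) * bal 1 m))
        + (n.choose 0 : ℚ) * bal 0 0 := by
        congr 1
        · refine Finset.sum_congr rfl (fun m _ => ?_)
          rw [pascal m, bal_step]
          ring
        · norm_num
    _ = T n 0 + T n 1 := by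
        rw [Finset.sum_add_distrib, hT0, hT1]
        ring

lemma sum_swap_T (i j : ℕ) :
    ∑ k ∈ Finset.range (i+j+2), T (i+1) k * T j k
      = ∑ k ∈ Finset.range (i+j+2), T i k * T (j+1) k := by
  have expandL : ∑ k ∈ Finset.range ((i+j+1)+1), T (i+1) k * T j k
      = (∑ k ∈ Finset.range (i+j+1), T (i+1) (k+1) * T j (k+1)) + T (i+1) 0 * T j 0 :=
    Finset.sum_range_succ' _ _
  have expandR : ∑ k ∈ Finset.range ((i+j+1)+1), T i k * T (j+1) k
      = (∑ k ∈ Finset.range (i+j+1), T i (k+1) * T (j+1) (k+1)) + T i 0 * T (j+1) 0 :=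
    Finset.sum_range_succ' _ _
  rw [show i+j+2 = (i+j+1)+1 from rfl, expandL, expandR]
  have L : ∑ k ∈ Finset.range (i+j+1), T (i+1) (k+1) * T j (k+1)
      = (∑ k ∈ Finset.range (i+j+1), T i k * T j (k+1))
        + (∑ k ∈ Finset.range (i+j+1), T i (k+1) * T j (k+1))
        + (∑ k ∈ Finset.range (i+j+1), T i (k+2) * T j (k+1)) := by
    rw [← Finset.sum_add_distrib, ← Finset.sum_add_distrib]
    refine Finset.sum_congr rfl (fun k _ => ?_)
    rw [T_rec_succ]; ring
  have R : ∑ k ∈ Finset.range (i+j+1), T i (k+1) * T (j+1) (k+1)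
      = (∑ k ∈ Finset.range (i+j+1), T i (k+1) * T j k)
        + (∑ k ∈ Finset.range (i+j+1), T i (k+1) * T j (k+1))
        + (∑ k ∈ Finset.range (i+j+1), T i (k+1) * T j (k+2)) := by
    rw [← Finset.sum_add_distrib, ← Finset.sum_add_distrib]
    refine Finset.sum_congr rfl (fun k _ => ?_)
    rw [T_rec_succ]; ring
  have hA' : ∑ k ∈ Finset.range (i+j+1), T i (k+1) * T j k
      = T i 1 * T j 0 + ∑ k ∈ Finset.range (i+j+1), T i (k+2) * T j (k+1) := by
    rw [show i+j+1 = (i+j)+1 from rfl, Finset.sum_range_succ',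
      Finset.sum_range_succ (fun k => T i (k+2) * T j (k+1)) (i+j)]
    rw [T_eq_zero (show i < i+j+2 by omega)]
    rw [Finset.sum_congr rfl (fun k _ => by
      rw [show k+1+1 = k+2 by omega] :
      ∀ k ∈ Finset.range (i+j), T i (k+1+1) * T j (k+1) = T i (k+2) * T j (k+1))]
    ring
  have hA : ∑ k ∈ Finset.range (i+j+1), T i k * T j (k+1)
      = T i 0 * T j 1 + ∑ k ∈ Finset.range (i+j+1), T i (k+1) * T j (k+2) := by
    rw [show i+j+1 = (i+j)+1 from rfl, Finset.sum_range_succ',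
      Finset.sum_range_succ (fun k => T i (k+1) * T j (k+2)) (i+j)]
    rw [T_eq_zero (show i < i+j+1 by omega)]
    rw [Finset.sum_congr rfl (fun k _ => by
      rw [show k+1+1 = k+2 by omega] :
      ∀ k ∈ Finset.range (i+j), T i (k+1) * T j (k+1+1) = T i (k+1) * T j (k+2))]
    ring
  rw [L, R, T_rec_zero i, T_rec_zero j, hA', hA]
  ring

lemma T_zero_zero : T 0 0 = 1 := by
  rw [T, Finset.sum_range_one, bal_zero]
  norm_num

lemma main_sum : ∀ i j : ℕ, ∑ k ∈ Finset.range (i+j+1), T i k * T j k = T (i+j) 0 := by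
  intro i
  induction i with
  | zero =>
    intro j
    rw [show 0+j+1 = j+1 from by omega, Finset.sum_range_succ']
    have hz : ∑ k ∈ Finset.range j, T 0 (k+1) * T j (k+1) = 0 := by
      apply Finset.sum_eq_zero
      intro k _
      rw [T_eq_zero (show 0 < k+1 by omega)]
      ring
    rw [hz, T_zero_zero, show 0+j = j from by omega]
    ring
  | succ i ih =>
    intro j
    rw [show i+1+j+1 = i+j+2 by omega, sum_swap_T]
    have := ih (j+1)
    rw [show i+(j+1)+1 = i+j+2 by omega, show i+(j+1) = i+j+1 by omega] at this
    rw [this, show i+1+j = i+j+1 by omega]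

theorem stmt_3 (i j : ℕ) :
    (∑ k ∈ Finset.range (min i j + 1),
        (i.choose k : ℚ) * (j.choose k : ℚ) *
          hyp2F1 (((k : ℚ) - i + 1) / 2) (((k : ℚ) - i) / 2) ((k : ℚ) + 2) 4 (i + 1) *
          hyp2F1 (((k : ℚ) - j + 1) / 2) (((k : ℚ) - j) / 2) ((k : ℚ) + 2) 4 (j + 1)) =
      hyp2F1 ((1 - (i : ℚ) - j) / 2) ((-(i : ℚ) - j) / 2) 2 4 (i + j + 1) := by
  have hR : hyp2F1 ((1 - (i : ℚ) - j) / 2) ((-(i : ℚ) - j) / 2) 2 4 (i + j + 1)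
      = T (i+j) 0 := by
    have h := hyp_eq_T (i+j) 0 (Nat.zero_le _)
    have e1 : (((0:ℕ):ℚ) - ((i+j:ℕ):ℚ) + 1)/2 = (1 - (i:ℚ) - j)/2 := by push_cast; ring
    have e2 : (((0:ℕ):ℚ) - ((i+j:ℕ):ℚ))/2 = (-(i:ℚ) - j)/2 := by push_cast; ring
    have e3 : ((0:ℕ):ℚ) + 2 = (2:ℚ) := by push_cast; ring
    rw [e1, e2, e3, Nat.choose_zero_right] at h
    push_cast at h
    rw [one_mul] at h
    exact h
  rw [hR, ← main_sum i j]
  rw [Finset.sum_subset (Finset.range_subset_range.2 (show min i j + 1 ≤ i+j+1 by omega))]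
  · refine Finset.sum_congr rfl (fun k hk => ?_)
    rcases le_or_gt k i with hki | hki
    · rcases le_or_gt k j with hkj | hkj
      · rw [← hyp_eq_T i k hki, ← hyp_eq_T j k hkj]
        ring
      · rw [T_eq_zero hkj, Nat.choose_eq_zero_of_lt hkj]
        push_cast
        ring
    · rw [T_eq_zero hki, Nat.choose_eq_zero_of_lt hki]
      push_cast
      ring
  · intro k _ hk
    rw [Finset.mem_range, not_lt] at hk
    rcases (show i < k ∨ j < k by omega) with h | h
    · rw [Nat.choose_eq_zero_of_lt h]
      push_cast
      ring
    · rw [Nat.choose_eq_zero_of_lt h]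
      push_cast
      ring
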